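/- arXiv:0801.1478 — 6 statements merged into one kernel-verified Lean document; each statement's English description precedes it below -/
import Mathlib

section
/- Let C be a d-uniform clutter with incidence matrix A. If the set covering polyhedron Q(A) = {x ∈ ℝ^n : x ≥ 0, xA ≥ 1} is integral, then there exists a minimal vertex cover of C intersecting every edge of C in exactly one vertex. -/
/-! Consider the face of `Q(A)` on which every edge inequality is tight and every vertex lying in
no edge is set to `0`. Uniformity makes it nonempty (put `1/d` on the covered vertices), and it
lies in the unit cube, so it is compact and has an extreme point. Being a face, that point is a
vertex of `Q(A)`, hence integral, hence the indicator vector of a set `S`. Tightness says that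
`S` meets every edge exactly once, and each vertex of `S` is the only vertex of `S` on some edge,
so `S` is a minimal cover. -/

open Finset

/-- A clutter on vertex set `Fin n`: a family of nonempty edges, none contained in another. -/
structure Clutter (n : ℕ) where
  edges : Finset (Finset (Fin n))
  nonempty_edges : ∀ e ∈ edges, e.Nonempty
  antichain : ∀ e ∈ edges, ∀ f ∈ edges, e ⊆ f → e = f

namespace Clutter

variable {n : ℕ}

/-- `C` is `d`-uniform: every edge has exactly `d` vertices. -/
def Uniform (C : Clutter n) (d : ℕ) : Prop := ∀ e ∈ C.edges, e.card = d

/-- `S` is a vertex cover of `C`. -/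
def IsCover (C : Clutter n) (S : Finset (Fin n)) : Prop := ∀ e ∈ C.edges, (e ∩ S).Nonempty

/-- `S` is a minimal vertex cover of `C`. -/
def IsMinCover (C : Clutter n) (S : Finset (Fin n)) : Prop :=
  C.IsCover S ∧ ∀ T ⊆ S, C.IsCover T → T = S

/-- The vertex covering number `α₀(C)`. -/
noncomputable def coverNumber (C : Clutter n) : ℕ :=
  sInf {k | ∃ S : Finset (Fin n), C.IsCover S ∧ S.card = k}

/-- The edge independence (matching) number `β₁(C)`. -/
noncomputable def matchNumber (C : Clutter n) : ℕ :=
  sSup {k | ∃ M : Finset (Finset (Fin n)), M ⊆ C.edges ∧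
    (∀ e ∈ M, ∀ f ∈ M, e ≠ f → Disjoint e f) ∧ M.card = k}

/-- `C` has a perfect matching: pairwise disjoint edges covering all vertices. -/
def HasPerfectMatching (C : Clutter n) : Prop :=
  ∃ M : Finset (Finset (Fin n)), M ⊆ C.edges ∧
    (∀ e ∈ M, ∀ f ∈ M, e ≠ f → Disjoint e f) ∧ (∀ i : Fin n, ∃ e ∈ M, i ∈ e)

/-- The set covering polyhedron `Q(A) = {x : x ≥ 0, xA ≥ 1}`. -/
def QA (C : Clutter n) : Set (Fin n → ℝ) :=
  {x | (∀ i, 0 ≤ x i) ∧ ∀ e ∈ C.edges, 1 ≤ ∑ i ∈ e, x i}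

/-- `Q(A)` is an integral polyhedron: all its vertices (extreme points) are integral. -/
def QAIntegral (C : Clutter n) : Prop :=
  ∀ x ∈ Set.extremePoints ℝ C.QA, ∀ i, ∃ z : ℤ, x i = (z : ℝ)

/-- Deletion of a vertex: remove `v` and all edges through it. -/
def delete (C : Clutter n) (v : Fin n) : Clutter n where
  edges := C.edges.filter (fun e => v ∉ e)
  nonempty_edges := fun e he => C.nonempty_edges e (mem_filter.mp he).1
  antichain := fun e he f hf hef =>
    C.antichain e (mem_filter.mp he).1 f (mem_filter.mp hf).1 hef

/-- The edges of the minor of `C` obtained by deleting the vertices in `D`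
(setting them to `0`) and contracting the vertices in `U` (setting them to `1`):
the minimal nonempty sets of the form `e \ U` with `e` an edge disjoint from `D`. -/
def minorEdges (C : Clutter n) (D U : Finset (Fin n)) : Finset (Finset (Fin n)) :=
  ((C.edges.filter (fun e => Disjoint e D)).image (fun e => e \ U)).filter
    (fun e => e.Nonempty ∧
      ∀ f ∈ (C.edges.filter (fun e => Disjoint e D)).image (fun e => e \ U),
        f.Nonempty → f ⊆ e → f = e)

/-- The minor of `C` determined by deleting `D` and contracting `U`. -/
def minor (C : Clutter n) (D U : Finset (Fin n)) : Clutter n where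
  edges := C.minorEdges D U
  nonempty_edges := fun e he => ((mem_filter.mp he).2).1
  antichain := fun e he f hf hef =>
    ((mem_filter.mp hf).2).2 e (mem_filter.mp he).1 ((mem_filter.mp he).2).1 hef

/-- The König property: `α₀(C) = β₁(C)`. -/
def HasKonig (C : Clutter n) : Prop := C.coverNumber = C.matchNumber

/-- The packing property: every (proper) minor of `C` has the König property. -/
def PackingProperty (C : Clutter n) : Prop :=
  ∀ D U : Finset (Fin n), Disjoint D U →
    (∀ e ∈ C.edges, Disjoint e D → ¬ e ⊆ U) → (C.minor D U).HasKonig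

/-- The max-flow min-cut property: for every nonnegative integral `α` the LP
`min{⟨α,x⟩ : x ≥ 0, xA ≥ 1}` and its dual `max{⟨y,1⟩ : y ≥ 0, Ay ≤ α}` both have
integral optimum solutions (expressed via a pair of integral feasible solutions
with equal objective values, which are then optimal by LP duality). -/
def HasMFMC (C : Clutter n) : Prop :=
  ∀ α : Fin n → ℕ,
    ∃ (x : Fin n → ℕ) (y : Finset (Fin n) → ℕ),
      (∀ e ∈ C.edges, 1 ≤ ∑ i ∈ e, x i) ∧
      (∀ e, e ∉ C.edges → y e = 0) ∧
      (∀ i : Fin n, ∑ e ∈ C.edges.filter (fun e => i ∈ e), y e ≤ α i) ∧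
      (∑ i, α i * x i = ∑ e ∈ C.edges, y e)

/-- The incidence matrix of `C`, with columns indexed by the edges. -/
def inc (C : Clutter n) : Matrix (Fin n) {e // e ∈ C.edges} ℤ :=
  Matrix.of fun i e => if i ∈ e.1 then 1 else 0

end Clutter

/-- `Δ_r(A) = 1`: the gcd of all nonzero `r × r` subdeterminants of `A` is `1`,
i.e. every common divisor of them is a unit. -/
def DeltaOne {m m' : Type*} [Fintype m] [Fintype m'] (A : Matrix m m' ℤ) (r : ℕ) : Prop :=
  ∀ k : ℤ, (∀ (f : Fin r → m) (g : Fin r → m'), Function.Injective f → Function.Injective g →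
    (A.submatrix f g).det ≠ 0 → k ∣ (A.submatrix f g).det) → IsUnit k

theorem isExtreme_setOf_forall_eq_of_forall_le {ι E : Type*} [AddCommGroup E] [Module ℝ E]
    {A : Set E} {s : Set ι} (l : ι → E →ₗ[ℝ] ℝ) (c : ι → ℝ)
    (hA : ∀ x ∈ A, ∀ j ∈ s, c j ≤ l j x) :
    IsExtreme ℝ A {x ∈ A | ∀ j ∈ s, l j x = c j} := by
  refine ⟨Set.sep_subset _ _, ?_⟩
  rintro x₁ hx₁ x₂ hx₂ _ ⟨-, hx⟩ ⟨a, b, ha, hb, hab, rfl⟩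
  refine ⟨hx₁, fun j hj => ?_⟩
  have h := hx j hj
  simp only [map_add, map_smul, smul_eq_mul] at h
  have hsum : a * (l j x₁ - c j) + b * (l j x₂ - c j) = 0 := by
    linear_combination h - c j * hab
  have h₂ : 0 ≤ b * (l j x₂ - c j) := mul_nonneg hb.le (sub_nonneg.mpr (hA x₂ hx₂ j hj))
  exact le_antisymm (sub_nonpos.mp (nonpos_of_mul_nonpos_right (by linarith) ha))
    (hA x₁ hx₁ j hj)

namespace Clutter

variable {n : ℕ} (C : Clutter n)

def tightFace : Set (Fin n → ℝ) :=
  {x ∈ C.QA | (∀ e ∈ C.edges, ∑ i ∈ e, x i = 1) ∧ ∀ i, (∀ e ∈ C.edges, i ∉ e) → x i = 0}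

theorem isExtreme_tightFace : IsExtreme ℝ C.QA C.tightFace := by
  rw [tightFace, Set.sep_and]
  refine .inter ?_ ?_
  · simpa [LinearMap.sum_apply] using isExtreme_setOf_forall_eq_of_forall_le
      (s := (C.edges : Set (Finset (Fin n))))
      (fun e => ∑ i ∈ e, (LinearMap.proj i : (Fin n → ℝ) →ₗ[ℝ] ℝ)) (fun _ => 1)
      fun x hx e he => by simpa [LinearMap.sum_apply] using hx.2 e he
  · exact isExtreme_setOf_forall_eq_of_forall_le (s := {i | ∀ e ∈ C.edges, i ∉ e})
      LinearMap.proj (fun _ => 0) fun x hx i _ => hx.1 i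

theorem tightFace_subset_Icc : C.tightFace ⊆ Set.Icc 0 1 := by
  rintro x ⟨⟨hx0, -⟩, htight, hfree⟩
  refine ⟨hx0, fun i => ?_⟩
  by_cases hi : ∃ e ∈ C.edges, i ∈ e
  · obtain ⟨e, he, hie⟩ := hi
    calc x i ≤ ∑ j ∈ e, x j := single_le_sum (fun j _ => hx0 j) hie
      _ = 1 := htight e he
  · simp [hfree i fun e he hie => hi ⟨e, he, hie⟩]

theorem isClosed_QA : IsClosed C.QA := by
  simp only [QA, Set.ofPred_and, Set.ofPred_forall]
  exact (isClosed_iInter fun i => isClosed_le continuous_const (continuous_apply i)).inter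
    (isClosed_iInter fun e => isClosed_iInter fun _ => isClosed_le continuous_const (by fun_prop))

theorem isClosed_tightFace : IsClosed C.tightFace := by
  rw [tightFace, ← Set.inter_ofPred_eq_sep]
  refine C.isClosed_QA.inter ?_
  simp only [Set.ofPred_and, Set.ofPred_forall]
  exact (isClosed_iInter fun e => isClosed_iInter fun _ =>
      isClosed_eq (by fun_prop) continuous_const).inter
    (isClosed_iInter fun i => isClosed_iInter fun _ =>
      isClosed_eq (continuous_apply i) continuous_const)

theorem isCompact_tightFace : IsCompact C.tightFace :=
  isCompact_Icc.of_isClosed_subset C.isClosed_tightFace C.tightFace_subset_Icc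

theorem tightFace_nonempty {d : ℕ} (hC : C.Uniform d) : C.tightFace.Nonempty := by
  classical
  set x : Fin n → ℝ := fun i => if ∃ e ∈ C.edges, i ∈ e then (d : ℝ)⁻¹ else 0
  have htight : ∀ e ∈ C.edges, ∑ i ∈ e, x i = 1 := by
    intro e he
    have hd : (d : ℝ) ≠ 0 := by
      rw [← hC e he, Nat.cast_ne_zero, ← pos_iff_ne_zero, card_pos]
      exact C.nonempty_edges e he
    rw [sum_congr rfl fun i hi => if_pos ⟨e, he, hi⟩, sum_const, hC e he, nsmul_eq_mul,
      mul_inv_cancel₀ hd]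
  refine ⟨x, ⟨fun i => by positivity, fun e he => (htight e he).ge⟩, htight, fun i hi => ?_⟩
  exact if_neg fun ⟨e, he, hie⟩ => hi e he hie

theorem exists_indicator_mem_tightFace {d : ℕ} (hC : C.Uniform d) (hQ : C.QAIntegral) :
    ∃ S : Finset (Fin n), (fun i => if i ∈ S then (1 : ℝ) else 0) ∈ C.tightFace := by
  classical
  obtain ⟨x, hx⟩ := C.isCompact_tightFace.extremePoints_nonempty (C.tightFace_nonempty hC)
  have hxF : x ∈ C.tightFace := hx.1
  have h01 : ∀ i, x i = 0 ∨ x i = 1 := fun i => by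
    obtain ⟨z, hz⟩ := hQ x (C.isExtreme_tightFace.extremePoints_subset_extremePoints hx) i
    obtain ⟨h0, h1⟩ := C.tightFace_subset_Icc hxF
    have hxi : (0 : ℝ) ≤ x i ∧ x i ≤ 1 := ⟨h0 i, h1 i⟩
    rw [hz] at hxi
    have hz01 : 0 ≤ z ∧ z ≤ 1 := by exact_mod_cast hxi
    obtain rfl | rfl : z = 0 ∨ z = 1 := by omega
    all_goals simp [hz]
  refine ⟨univ.filter (x · = 1), ?_⟩
  convert hxF using 1
  funext i
  rcases h01 i with h | h <;> simp [h]

theorem card_inter_eq_one_of_indicator_mem_tightFace {S : Finset (Fin n)}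
    (hS : (fun i => if i ∈ S then (1 : ℝ) else 0) ∈ C.tightFace) :
    ∀ e ∈ C.edges, #(e ∩ S) = 1 := by
  intro e he
  have h := hS.2.1 e he
  rw [sum_boole, filter_mem_eq_inter] at h
  exact_mod_cast h

theorem isMinCover_of_card_inter_eq_one {S : Finset (Fin n)}
    (hS : ∀ e ∈ C.edges, #(e ∩ S) = 1) (hcov : ∀ v ∈ S, ∃ e ∈ C.edges, v ∈ e) :
    C.IsMinCover S := by
  refine ⟨fun e he => card_pos.mp (by rw [hS e he]; exact one_pos), fun T hTS hT => ?_⟩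
  refine hTS.antisymm fun v hv => ?_
  obtain ⟨e, he, hve⟩ := hcov v hv
  obtain ⟨w, hw⟩ := hT e he
  obtain ⟨hwe, hwT⟩ := mem_inter.mp hw
  have hwv : w = v :=
    card_le_one.mp (hS e he).le w (mem_inter.mpr ⟨hwe, hTS hwT⟩) v (mem_inter.mpr ⟨hve, hv⟩)
  exact hwv ▸ hwT

end Clutter

/-- If `C` is a `d`-uniform clutter whose set covering polyhedron `Q(A)`
is integral, then there exists a minimal vertex cover of `C` intersecting every edge of
`C` in exactly one vertex. -/
theorem stmt0 {n d : ℕ} (C : Clutter n) (hC : C.Uniform d) (hQ : C.QAIntegral) :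
    ∃ S : Finset (Fin n), C.IsMinCover S ∧ ∀ e ∈ C.edges, (e ∩ S).card = 1 := by
  obtain ⟨S, hS⟩ := C.exists_indicator_mem_tightFace hC hQ
  have hcard := C.card_inter_eq_one_of_indicator_mem_tightFace hS
  refine ⟨S, C.isMinCover_of_card_inter_eq_one hcard fun v hv => ?_, hcard⟩
  by_contra! hfree
  simpa [hv] using hS.2.2 v hfree
end

section
/- Let C be a d-uniform clutter with a perfect matching f_1,...,f_r such that Q(A) is integral. Then r = α₀(C), and there are d pairwise disjoint minimal vertex covers X_1,...,X_d of C, each of size α₀(C), whose union is the vertex set of C. -/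
open Finset

section Aux

open Finset

/-- An extreme point of the optimal face of a linear functional on a set is an
extreme point of the set. -/
private lemma extremePoint_of_face {N : ℕ} {s F : Set (Fin N → ℝ)} (c : Fin N → ℝ) {m : ℝ}
    (hFs : F ⊆ s) (hlow : ∀ x ∈ s, m ≤ ∑ i, c i * x i)
    (hmem : ∀ x ∈ s, (∑ i, c i * x i) = m → x ∈ F) (hval : ∀ x ∈ F, (∑ i, c i * x i) = m)
    {z : Fin N → ℝ} (hz : z ∈ Set.extremePoints ℝ F) : z ∈ Set.extremePoints ℝ s := by
  obtain ⟨hzF, hzx⟩ := hz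
  refine ⟨hFs hzF, fun a ha b hb hseg => ?_⟩
  obtain ⟨θa, θb, h0a, h0b, hab, heq⟩ := hseg
  have hexp : (∑ i, c i * z i) = θa * (∑ i, c i * a i) + θb * (∑ i, c i * b i) := by
    rw [← heq]
    simp only [Pi.add_apply, Pi.smul_apply, smul_eq_mul, Finset.mul_sum,
      ← Finset.sum_add_distrib]
    exact Finset.sum_congr rfl fun i _ => by ring
  have hza := hlow a ha; have hzb := hlow b hb
  have hzm := hval z hzF
  have key : ∀ t u A B : ℝ, 0 < t → 0 ≤ u → t + u = 1 → m ≤ A → m ≤ B →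
      t * A + u * B = m → A = m := by
    intro t u A B ht hu htu hA hB hE
    by_contra h
    have hA' : m < A := lt_of_le_of_ne hA (Ne.symm h)
    have h1 : t * m < t * A := mul_lt_mul_of_pos_left hA' ht
    have h2 : u * m ≤ u * B := mul_le_mul_of_nonneg_left hB hu
    have h3 : t * m + u * m = m := by rw [← add_mul, htu, one_mul]
    linarith
  have ham : (∑ i, c i * a i) = m :=
    key θa θb _ _ h0a h0b.le hab hza hzb (by linarith)
  have hbm : (∑ i, c i * b i) = m :=
    key θb θa _ _ h0b h0a.le (by linarith) hzb hza (by linarith)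
  exact hzx (hmem a ha ham) (hmem b hb hbm) ⟨θa, θb, h0a, h0b, hab, heq⟩

/-- The key step: given a point of `Q(A)` with all edge sums equal to `1` that vanishes
on `W`, there is a set `S` disjoint from `W` meeting every edge exactly once. -/
private lemma key_step {n r : ℕ} (C : Clutter n)
    (f : Fin r → Finset (Fin n)) (hf : ∀ j, f j ∈ C.edges)
    (hcov : ∀ i : Fin n, ∃ j, i ∈ f j)
    (hQ : C.QAIntegral)
    (W : Finset (Fin n)) (x₀ : Fin n → ℝ)
    (hx₀0 : ∀ i, 0 ≤ x₀ i)
    (hx₀e : ∀ e ∈ C.edges, ∑ i ∈ e, x₀ i = 1)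
    (hx₀W : ∀ i ∈ W, x₀ i = 0) :
    ∃ S : Finset (Fin n), Disjoint S W ∧ ∀ e ∈ C.edges, (e ∩ S).card = 1 := by
  classical
  -- the linear functional whose optimal face over Q(A) is F below
  set c : Fin n → ℝ :=
    fun i => ((C.edges.filter (fun e => i ∈ e)).card : ℝ) + (if i ∈ W then 1 else 0) with hc
  set m : ℝ := (C.edges.card : ℝ) with hm
  have hswap : ∀ x : Fin n → ℝ,
      (∑ i, c i * x i) = (∑ e ∈ C.edges, ∑ i ∈ e, x i) + ∑ i ∈ W, x i := by
    intro x
    have h1 : ∀ i : Fin n, c i * x i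
        = (∑ e ∈ C.edges, if i ∈ e then x i else 0) + (if i ∈ W then x i else 0) := by
      intro i
      rw [hc]
      rw [add_mul]
      congr 1
      · rw [← Finset.sum_filter, Finset.sum_const, nsmul_eq_mul]
      · split <;> simp
    rw [Finset.sum_congr rfl fun i _ => h1 i, Finset.sum_add_distrib]
    congr 1
    · rw [Finset.sum_comm]
      refine Finset.sum_congr rfl fun e _ => ?_
      rw [Finset.sum_ite_mem, Finset.univ_inter]
    · rw [Finset.sum_ite_mem, Finset.univ_inter]
  -- the face F
  set F : Set (Fin n → ℝ) := {x | (∀ i, 0 ≤ x i) ∧ (∀ e ∈ C.edges, ∑ i ∈ e, x i = 1)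
    ∧ ∀ i ∈ W, x i = 0} with hF
  have hFQ : F ⊆ C.QA := fun x hx => ⟨hx.1, fun e he => le_of_eq (hx.2.1 e he).symm⟩
  have hlow : ∀ x ∈ C.QA, m ≤ ∑ i, c i * x i := by
    intro x hx
    rw [hswap]
    have h1 : m ≤ ∑ e ∈ C.edges, ∑ i ∈ e, x i := by
      rw [hm]
      calc ((C.edges.card : ℝ)) = ∑ _e ∈ C.edges, (1 : ℝ) := by simp
      _ ≤ _ := Finset.sum_le_sum fun e he => hx.2 e he
    have h2 : (0 : ℝ) ≤ ∑ i ∈ W, x i := Finset.sum_nonneg fun i _ => hx.1 i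
    linarith
  have hmem : ∀ x ∈ C.QA, (∑ i, c i * x i) = m → x ∈ F := by
    intro x hx hxm
    rw [hswap] at hxm
    have h2 : (0 : ℝ) ≤ ∑ i ∈ W, x i := Finset.sum_nonneg fun i _ => hx.1 i
    have h1 : ∑ e ∈ C.edges, ((∑ i ∈ e, x i) - 1) ≤ 0 := by
      rw [Finset.sum_sub_distrib]
      simp only [Finset.sum_const, nsmul_eq_mul, mul_one]
      rw [hm] at hxm
      linarith
    have h3 : ∑ e ∈ C.edges, ((∑ i ∈ e, x i) - 1) = 0 :=
      le_antisymm h1 (Finset.sum_nonneg fun e he => by linarith [hx.2 e he])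
    have h4 : ∀ e ∈ C.edges, (∑ i ∈ e, x i) - 1 = 0 :=
      (Finset.sum_eq_zero_iff_of_nonneg fun e he => by linarith [hx.2 e he]).mp h3
    have h5 : ∀ e ∈ C.edges, (∑ i ∈ e, x i) = 1 := fun e he => by linarith [h4 e he]
    refine ⟨hx.1, h5, ?_⟩
    have h6 : ∑ i ∈ W, x i = 0 := by
      have : ∑ e ∈ C.edges, ∑ i ∈ e, x i = m := by
        rw [hm]
        rw [Finset.sum_congr rfl h5]; simp
      linarith
    exact fun i hi => (Finset.sum_eq_zero_iff_of_nonneg fun i _ => hx.1 i).mp h6 i hi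
  have hval : ∀ x ∈ F, (∑ i, c i * x i) = m := by
    intro x hx
    rw [hswap, Finset.sum_congr rfl hx.2.1, hm]
    have : ∑ i ∈ W, x i = 0 := Finset.sum_eq_zero hx.2.2
    simp [this]
  -- F is nonempty compact convex
  have hFne : F.Nonempty := ⟨x₀, hx₀0, hx₀e, hx₀W⟩
  have hsub : F ⊆ Set.Icc (0 : Fin n → ℝ) 1 := by
    rintro x ⟨hx0, hx1, -⟩
    constructor
    · intro i; exact hx0 i
    · intro i
      obtain ⟨j, hj⟩ := hcov i
      calc x i ≤ ∑ i' ∈ f j, x i' := Finset.single_le_sum (fun i' _ => hx0 i') hj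
      _ = 1 := hx1 (f j) (hf j)
  have hclosed : IsClosed F := by
    have h1 : IsClosed {x : Fin n → ℝ | ∀ i, 0 ≤ x i} := by
      rw [Set.setOf_forall]
      exact isClosed_iInter fun i => isClosed_le continuous_const (continuous_apply i)
    have h2 : IsClosed {x : Fin n → ℝ | ∀ e ∈ C.edges, ∑ i ∈ e, x i = 1} := by
      rw [Set.setOf_forall]
      refine isClosed_iInter fun e => ?_
      rw [Set.setOf_forall]
      exact isClosed_iInter fun _ =>
        isClosed_eq (continuous_finset_sum _ fun i _ => continuous_apply i) continuous_const
    have h3 : IsClosed {x : Fin n → ℝ | ∀ i ∈ W, x i = 0} := by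
      rw [Set.setOf_forall]
      refine isClosed_iInter fun i => ?_
      rw [Set.setOf_forall]
      exact isClosed_iInter fun _ => isClosed_eq (continuous_apply i) continuous_const
    have hFeq : F = {x : Fin n → ℝ | ∀ i, 0 ≤ x i}
        ∩ ({x | ∀ e ∈ C.edges, ∑ i ∈ e, x i = 1} ∩ {x | ∀ i ∈ W, x i = 0}) := by
      ext x; simp only [hF, Set.mem_setOf_eq, Set.mem_inter_iff, and_assoc]
    rw [hFeq]; exact h1.inter (h2.inter h3)
  have hcompact : IsCompact F := (isCompact_Icc).of_isClosed_subset hclosed hsub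
  -- extract an extreme point
  obtain ⟨z, hz⟩ := hcompact.extremePoints_nonempty hFne
  have hzQ : z ∈ Set.extremePoints ℝ C.QA := extremePoint_of_face c hFQ hlow hmem hval hz
  have hzF : z ∈ F := hz.1
  have hint : ∀ i, ∃ k : ℤ, z i = (k : ℝ) := hQ z hzQ
  -- z is 0/1-valued
  have h01 : ∀ i, z i = 0 ∨ z i = 1 := by
    intro i
    obtain ⟨k, hk⟩ := hint i
    have h0 : 0 ≤ z i := hzF.1 i
    have h1 : z i ≤ 1 := (hsub hzF).2 i
    rw [hk] at h0 h1 ⊢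
    have hk0 : 0 ≤ k := by exact_mod_cast h0
    have hk1 : k ≤ 1 := by exact_mod_cast h1
    interval_cases k <;> simp
  refine ⟨Finset.univ.filter (fun i => z i = 1), ?_, ?_⟩
  · rw [Finset.disjoint_left]
    intro i hi hiW
    have := hzF.2.2 i hiW
    rw [Finset.mem_filter] at hi
    rw [hi.2] at this; norm_num at this
  · intro e he
    have hsum : ∑ i ∈ e, z i = 1 := hzF.2.1 e he
    have hite : ∀ i ∈ e, z i = if z i = 1 then (1 : ℝ) else 0 := by
      intro i _
      rcases h01 i with h | h <;> simp [h]
    rw [Finset.sum_congr rfl hite, Finset.sum_boole] at hsum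
    have : e ∩ Finset.univ.filter (fun i => z i = 1) = e.filter (fun i => z i = 1) := by
      ext i; simp [Finset.mem_filter, Finset.mem_inter]
    rw [this]
    exact_mod_cast hsum

end Aux

/-- If `C` is a `d`-uniform clutter with a perfect matching
`f_1, …, f_r` and `Q(A)` is integral, then `r = α₀(C)` and there are `d` pairwise
disjoint minimal vertex covers of `C`, each of size `α₀(C)`, whose union is the
vertex set. -/
theorem stmt4 {n d r : ℕ} (C : Clutter n) (hC : C.Uniform d)
    (f : Fin r → Finset (Fin n)) (hf : ∀ j, f j ∈ C.edges)
    (hdisj : ∀ j k, j ≠ k → Disjoint (f j) (f k))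
    (hcov : ∀ i : Fin n, ∃ j, i ∈ f j)
    (hQ : C.QAIntegral) :
    r = C.coverNumber ∧
    ∃ X : Fin d → Finset (Fin n),
      (∀ i j, i ≠ j → Disjoint (X i) (X j)) ∧
      (∀ i, C.IsMinCover (X i) ∧ (X i).card = C.coverNumber) ∧
      (∀ v : Fin n, ∃ i, v ∈ X i) := by
  classical
  by_cases hE : C.edges = ∅
  · -- degenerate case: no edges, hence no vertices and `r = 0`
    have hn : n = 0 := by
      by_contra h
      obtain ⟨j, _⟩ := hcov ⟨0, Nat.pos_of_ne_zero h⟩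
      have := hf j; rw [hE] at this; exact absurd this (Finset.notMem_empty _)
    have hr : r = 0 := by
      by_contra h
      have := hf ⟨0, Nat.pos_of_ne_zero h⟩
      rw [hE] at this; exact absurd this (Finset.notMem_empty _)
    have hcn : C.coverNumber = 0 := by
      have h0 : (0 : ℕ) ∈ {k | ∃ S : Finset (Fin n), C.IsCover S ∧ S.card = k} :=
        ⟨∅, fun e he => by rw [hE] at he; exact absurd he (Finset.notMem_empty _), rfl⟩
      exact Nat.le_zero.mp (Nat.sInf_le h0)
    refine ⟨by rw [hr, hcn], fun _ => ∅, fun i j _ => Finset.disjoint_empty_left _, ?_, ?_⟩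
    · intro i
      refine ⟨⟨fun e he => by rw [hE] at he; exact absurd he (Finset.notMem_empty _),
        fun T hT _ => Finset.subset_empty.mp hT⟩, by rw [hcn, Finset.card_empty]⟩
    · intro v; exact absurd v.isLt (by omega)
  · -- main case
    obtain ⟨e₀, he₀⟩ := Finset.nonempty_iff_ne_empty.mpr hE
    have hd0 : 0 < d := by
      rw [← hC e₀ he₀]
      exact Finset.card_pos.mpr (C.nonempty_edges e₀ he₀)
    -- iteratively build pairwise disjoint sets meeting every edge exactly once
    have main : ∀ k : ℕ, k ≤ d → ∃ X : Fin k → Finset (Fin n),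
        (∀ i j, i ≠ j → Disjoint (X i) (X j)) ∧
        (∀ i, ∀ e ∈ C.edges, (e ∩ X i).card = 1) := by
      intro k hk
      induction k with
      | zero => exact ⟨Fin.elim0, fun i => i.elim0, fun i => i.elim0⟩
      | succ k ih =>
        obtain ⟨X, hXd, hX1⟩ := ih (Nat.le_of_succ_le hk)
        set W : Finset (Fin n) := Finset.univ.biUnion X with hW
        have hkd : k < d := hk
        have heW : ∀ e ∈ C.edges, (e ∩ W).card = k := by
          intro e he
          have h1 : e ∩ W = Finset.univ.biUnion (fun i => e ∩ X i) := by
            ext v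
            simp only [hW, Finset.mem_inter, Finset.mem_biUnion, Finset.mem_univ, true_and]
            tauto
          rw [h1, Finset.card_biUnion (fun i _ j _ hij =>
            Finset.disjoint_of_subset_left Finset.inter_subset_right
              (Finset.disjoint_of_subset_right Finset.inter_subset_right (hXd i j hij)))]
          simp [hX1 _ e he]
        have hδ : (0 : ℝ) < (d : ℝ) - (k : ℝ) := by
          rw [sub_pos]; exact_mod_cast hkd
        set x₀ : Fin n → ℝ := fun i => if i ∈ W then 0 else ((d : ℝ) - (k : ℝ))⁻¹ with hx₀
        have hx₀0 : ∀ i, 0 ≤ x₀ i := by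
          intro i; rw [hx₀]; dsimp only
          split
          · exact le_refl 0
          · positivity
        have hx₀e : ∀ e ∈ C.edges, ∑ i ∈ e, x₀ i = 1 := by
          intro e he
          rw [hx₀]
          rw [Finset.sum_ite, Finset.sum_const, Finset.sum_const]
          have h1 : e.filter (fun i => i ∈ W) = e ∩ W := by
            ext i; simp [Finset.mem_filter, Finset.mem_inter]
          have h2 : e.filter (fun i => ¬ i ∈ W) = e \ W := by
            ext i; simp [Finset.mem_filter, Finset.mem_sdiff]
          have h3 : (e \ W).card = d - k := by
            have := Finset.card_inter_add_card_sdiff e W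
            rw [heW e he] at this
            rw [hC e he] at this
            omega
          rw [h1, h2, h3]
          have h4 : ((d - k : ℕ) : ℝ) = (d : ℝ) - (k : ℝ) := by
            rw [Nat.cast_sub hkd.le]
          rw [smul_zero, zero_add, nsmul_eq_mul, h4]
          field_simp
        have hx₀W : ∀ i ∈ W, x₀ i = 0 := fun i hi => by rw [hx₀]; simp [hi]
        obtain ⟨S, hSW, hS1⟩ := key_step C f hf hcov hQ W x₀ hx₀0 hx₀e hx₀W
        refine ⟨Fin.cons S X, ?_, ?_⟩
        · intro i j hij
          induction i using Fin.cases with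
          | zero =>
            induction j using Fin.cases with
            | zero => exact absurd rfl hij
            | succ j =>
              rw [Fin.cons_zero, Fin.cons_succ]
              exact Finset.disjoint_of_subset_right
                (Finset.subset_biUnion_of_mem X (Finset.mem_univ j)) hSW
          | succ i =>
            induction j using Fin.cases with
            | zero =>
              rw [Fin.cons_zero, Fin.cons_succ]
              exact (Finset.disjoint_of_subset_right
                (Finset.subset_biUnion_of_mem X (Finset.mem_univ i)) hSW).symm
            | succ j =>
              rw [Fin.cons_succ, Fin.cons_succ]
              exact hXd i j (fun h => hij (by rw [h]))
        · intro i
          induction i using Fin.cases with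
          | zero => rw [Fin.cons_zero]; exact hS1
          | succ i => rw [Fin.cons_succ]; exact hX1 i
    obtain ⟨X, hXd, hX1⟩ := main d le_rfl
    -- each X i has cardinality r
    have hcard : ∀ i, (X i).card = r := by
      intro i
      have h1 : X i = Finset.univ.biUnion (fun j => X i ∩ f j) := by
        ext v
        simp only [Finset.mem_biUnion, Finset.mem_univ, Finset.mem_inter, true_and]
        constructor
        · intro hv; obtain ⟨j, hj⟩ := hcov v; exact ⟨j, hv, hj⟩
        · rintro ⟨j, hv, -⟩; exact hv
      rw [h1, Finset.card_biUnion (fun a _ b _ hab =>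
        Finset.disjoint_of_subset_left Finset.inter_subset_right
          (Finset.disjoint_of_subset_right Finset.inter_subset_right (hdisj a b hab)))]
      have h2 : ∀ j, (X i ∩ f j).card = 1 := by
        intro j; rw [Finset.inter_comm]; exact hX1 i (f j) (hf j)
      simp [h2]
    -- each X i is a cover
    have hcover : ∀ i, C.IsCover (X i) := by
      intro i e he
      exact Finset.card_pos.mp (by rw [hX1 i e he]; norm_num)
    -- lower bound: every cover has at least r elements
    have hlb : ∀ S : Finset (Fin n), C.IsCover S → r ≤ S.card := by
      intro S hS
      choose g hg using fun j => hS (f j) (hf j)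
      have hg1 : ∀ j, g j ∈ f j := fun j => (Finset.mem_inter.mp (hg j)).1
      have hg2 : ∀ j, g j ∈ S := fun j => (Finset.mem_inter.mp (hg j)).2
      have : (Finset.univ : Finset (Fin r)).card ≤ S.card := by
        refine Finset.card_le_card_of_injOn g (fun j _ => hg2 j) ?_
        intro a _ b _ hab
        by_contra h
        exact Finset.disjoint_left.mp (hdisj a b h) (hg1 a) (hab ▸ hg1 b)
      simpa using this
    -- r is the cover number
    have hrc : r = C.coverNumber := by
      have hmem : r ∈ {k | ∃ S : Finset (Fin n), C.IsCover S ∧ S.card = k} :=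
        ⟨X ⟨0, hd0⟩, hcover _, hcard _⟩
      refine le_antisymm ?_ (Nat.sInf_le hmem)
      exact le_csInf ⟨r, hmem⟩ (fun k hk => by obtain ⟨S, hS, rfl⟩ := hk; exact hlb S hS)
    refine ⟨hrc, X, hXd, ?_, ?_⟩
    · intro i
      refine ⟨⟨hcover i, ?_⟩, by rw [hcard i, hrc]⟩
      intro T hT hTc
      refine Finset.Subset.antisymm hT ?_
      intro v hv
      obtain ⟨j, hj⟩ := hcov v
      obtain ⟨w, hw⟩ := Finset.card_eq_one.mp (hX1 i (f j) (hf j))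
      have hvw : v = w := by
        have : v ∈ f j ∩ X i := Finset.mem_inter.mpr ⟨hj, hv⟩
        rw [hw] at this; exact Finset.mem_singleton.mp this
      obtain ⟨u, hu⟩ := hTc (f j) (hf j)
      have hu' : u ∈ f j ∩ X i := Finset.mem_inter.mpr
        ⟨(Finset.mem_inter.mp hu).1, hT (Finset.mem_inter.mp hu).2⟩
      have huw : u = w := by rw [hw] at hu'; exact Finset.mem_singleton.mp hu'
      rw [hvw, ← huw]
      exact (Finset.mem_inter.mp hu).2
    · -- the union of the X i is everything, by a cardinality argument
      have huniv : Finset.univ = Finset.univ.biUnion f := by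
        refine Finset.Subset.antisymm (fun v _ => ?_) (Finset.subset_univ _)
        obtain ⟨j, hj⟩ := hcov v
        exact Finset.mem_biUnion.mpr ⟨j, Finset.mem_univ j, hj⟩
      have hn : n = r * d := by
        have h1 : (Finset.univ : Finset (Fin n)).card = n := by simp
        rw [huniv, Finset.card_biUnion (fun a _ b _ hab => hdisj a b hab)] at h1
        have h2 : ∀ j : Fin r, (f j).card = d := fun j => hC (f j) (hf j)
        rw [Finset.sum_congr rfl (fun j _ => h2 j)] at h1
        simpa using h1.symm
      have hB : (Finset.univ.biUnion X).card = n := by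
        rw [Finset.card_biUnion (fun a _ b _ hab => hXd a b hab),
          Finset.sum_congr rfl (fun i _ => hcard i)]
        simp [hn, mul_comm]
      have hBuniv : Finset.univ.biUnion X = Finset.univ :=
        Finset.eq_univ_of_card _ (by simpa using hB)
      intro v
      have : v ∈ Finset.univ.biUnion X := by rw [hBuniv]; exact Finset.mem_univ v
      obtain ⟨i, _, hi⟩ := Finset.mem_biUnion.mp this
      exact ⟨i, hi⟩
end

section
/- Let C be a uniform clutter satisfying the max-flow min-cut property, with incidence matrix A of rank r. Then the greatest common divisor Δ_r(A) of all nonzero r×r minors of A is equal to 1; equivalently, A diagonalizes over ℤ (via row and column operations) to an identity matrix. -/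
open Finset

/-!
Uniformity and max-flow min-cut make the column lattice `L` of `A` saturated. If `m • z = A c`
with `m > 0` and `c ≥ 0`, take an integral optimal pair `(x, y)` for the weights `z`. Then
`m ⟨𝟙, y⟩ = m ⟨z, x⟩ ≥ ⟨𝟙, c⟩`, and since every column of `A` sums to `d`,
`d ⟨𝟙, y⟩ ≥ ⟨𝟙, z⟩`; as `A y ≤ z` and `⟨𝟙, A y⟩ = d ⟨𝟙, y⟩`, this forces `A y = z`. An arbitrary
relation `m • z = A t` is brought to this form by adding a large multiple of `A 𝟙` to `z`.

Hence `ℤⁿ ⧸ L` is torsion-free, so free, and `L ≅ ℤʳ` admits a retraction `ℤⁿ → L`. The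
inclusion `ℤʳ ≅ L ⊆ ℤⁿ` factors as `A D`, the retraction is some `G`, and `G (A D) = 1`. By
Cauchy–Binet `det (G A D)` lies in the ideal generated by the `r × r` minors of `A`.
-/

open Matrix Function
open LinearMap (toMatrix' toMatrix'_comp toMatrix'_id)
open nonZeroDivisors

theorem Submodule.exists_retraction_of_projective_quotient {R M : Type*} [Ring R]
    [AddCommGroup M] [Module R M] (L : Submodule R M) [Module.Projective R (M ⧸ L)] :
    ∃ ρ : M →ₗ[R] L, ∀ x : L, ρ x = x := by
  obtain ⟨s, hs⟩ := L.mkQ.exists_rightInverse_of_surjective L.range_mkQ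
  have hmem (x : M) : x - s (L.mkQ x) ∈ L := by
    rw [← Submodule.Quotient.mk_eq_zero, ← Submodule.mkQ_apply, map_sub,
      ← LinearMap.comp_apply L.mkQ s, hs, LinearMap.id_apply, sub_self]
  refine ⟨(LinearMap.id - s ∘ₗ L.mkQ).codRestrict L hmem, fun x => ?_⟩
  ext
  simp [(Submodule.Quotient.mk_eq_zero L).mpr x.2]

namespace Matrix

section CauchyBinet

variable {R : Type*} [CommRing R] {ι : Type*} [Fintype ι] {m : ℕ}

-- Half of Cauchy–Binet: expand `det (G * B)` multilinearly in its rows.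
theorem dvd_det_mul_of_dvd_det_submatrix_rows (k : R) (G : Matrix (Fin m) ι R)
    (B : Matrix ι (Fin m) R) (hB : ∀ j : Fin m → ι, Injective j → k ∣ (B.submatrix j id).det) :
    k ∣ (G * B).det := by
  classical
  have hdet : (G * B).det = detRowAlternating fun a => ∑ x, G a x • B x := by
    congr 1; ext a b; simp [mul_apply, smul_eq_mul]
  rw [hdet, ← AlternatingMap.coe_multilinearMap, MultilinearMap.map_sum]
  refine Finset.dvd_sum fun j _ => ?_
  rw [MultilinearMap.map_smul_univ, AlternatingMap.coe_multilinearMap]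
  by_cases hj : Injective j
  · exact (hB j hj).mul_left _
  · obtain ⟨a, b, hab, hne⟩ := not_injective_iff.mp hj
    rw [AlternatingMap.map_eq_zero_of_eq _ (fun i => B (j i)) (congrArg B hab) hne, smul_zero]
    exact dvd_zero k

theorem dvd_det_mul_of_dvd_det_submatrix_cols (k : R) (A : Matrix (Fin m) ι R)
    (D : Matrix ι (Fin m) R) (hA : ∀ j : Fin m → ι, Injective j → k ∣ (A.submatrix id j).det) :
    k ∣ (A * D).det := by
  rw [← det_transpose, transpose_mul]
  exact dvd_det_mul_of_dvd_det_submatrix_rows k _ _ fun j hj => by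
    simpa [← transpose_submatrix] using hA j hj

end CauchyBinet

theorem rank_map_algebraMap_of_isFractionRing {R K : Type*} [CommRing R] [IsDomain R] [Field K]
    [Algebra R K] [IsFractionRing R K] {ι κ : Type*} [Fintype ι] [Fintype κ]
    (A : Matrix ι κ R) : (A.map (algebraMap R K)).rank = A.rank := by
  let f : (ι → R) →ₗ[R] (ι → K) := LinearMap.pi fun i => Algebra.linearMap R K ∘ₗ LinearMap.proj i
  have hspan : Submodule.span K (Set.range (A.map (algebraMap R K)).col)
      = (Submodule.span R (Set.range A.col)).localized' K R⁰ f := by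
    rw [Submodule.localized'_span, ← Set.range_comp]
    rfl
  rw [rank_eq_finrank_span_cols, rank_eq_finrank_span_cols, hspan,
    IsLocalization.finrank_eq K R⁰ le_rfl,
    IsLocalizedModule.finrank_eq R⁰ (Submodule.toLocalized' K R⁰ f _) le_rfl]

variable {ι κ : Type*} [Fintype ι] [Fintype κ]

theorem isUnit_of_dvd_det_submatrix_of_isTorsionFree {R : Type*} [CommRing R] [IsDomain R]
    [IsPrincipalIdealRing R] (A : Matrix ι κ R)
    [Module.IsTorsionFree R ((ι → R) ⧸ LinearMap.range A.mulVecLin)] (k : R)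
    (hk : ∀ (f : Fin A.rank → ι) (g : Fin A.rank → κ), Injective f → Injective g →
      k ∣ (A.submatrix f g).det) :
    IsUnit k := by
  classical
  set L := LinearMap.range A.mulVecLin
  obtain ⟨ρ, hρ⟩ := L.exists_retraction_of_projective_quotient
  let e : L ≃ₗ[R] (Fin A.rank → R) := (Module.finBasisOfFinrankEq R L rfl).equivFun
  obtain ⟨χ, hχ⟩ := Module.projective_lifting_property A.mulVecLin.rangeRestrict
    e.symm.toLinearMap A.mulVecLin.surjective_rangeRestrict
  have hsection : (e.toLinearMap ∘ₗ ρ) ∘ₗ (A.mulVecLin ∘ₗ χ) = LinearMap.id := by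
    refine LinearMap.ext fun v => ?_
    have : A.mulVecLin (χ v) = (e.symm v : ι → R) :=
      congrArg Subtype.val (LinearMap.congr_fun hχ v)
    simp [this, hρ]
  have hGB : toMatrix' (e.toLinearMap ∘ₗ ρ) * (A * toMatrix' χ) = 1 := by
    have hA : toMatrix' A.mulVecLin = A := by
      rw [← Matrix.toLin'_apply', LinearMap.toMatrix'_toLin']
    rw [← toMatrix'_id, ← hsection, toMatrix'_comp, toMatrix'_comp, hA]
  have hdvd := dvd_det_mul_of_dvd_det_submatrix_rows k (toMatrix' (e.toLinearMap ∘ₗ ρ))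
    (A * toMatrix' χ) fun f hf => by
      rw [submatrix_mul _ _ _ id _ bijective_id, submatrix_id_id]
      exact dvd_det_mul_of_dvd_det_submatrix_cols k _ _ fun g hg => hk f g hf hg
  rw [hGB, det_one] at hdvd
  exact isUnit_of_dvd_one hdvd

theorem deltaOne_of_isTorsionFree (A : Matrix ι κ ℤ)
    [Module.IsTorsionFree ℤ ((ι → ℤ) ⧸ LinearMap.range A.mulVecLin)] :
    DeltaOne A (A.map (Int.cast : ℤ → ℚ)).rank := by
  intro k hk
  rw [show (Int.cast : ℤ → ℚ) = algebraMap ℤ ℚ from rfl,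
    rank_map_algebraMap_of_isFractionRing] at hk
  refine isUnit_of_dvd_det_submatrix_of_isTorsionFree A k fun f g hf hg => ?_
  by_cases h0 : (A.submatrix f g).det = 0
  · exact h0 ▸ dvd_zero k
  · exact hk f g hf hg h0

end Matrix

namespace Clutter

variable {n d : ℕ} (C : Clutter n)

theorem vecMul_inc_apply (x : Fin n → ℤ) (e : {e // e ∈ C.edges}) :
    (x ᵥ* C.inc) e = ∑ i ∈ e.1, x i := by
  simp [vecMul, dotProduct, inc]

theorem inc_mulVec_apply (y : {e // e ∈ C.edges} → ℤ) (i : Fin n) :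
    (C.inc *ᵥ y) i = ∑ e, if i ∈ e.1 then y e else 0 := by
  simp [mulVec, dotProduct, inc]

theorem inc_mulVec_nonneg {y : {e // e ∈ C.edges} → ℤ} (hy : 0 ≤ y) : 0 ≤ C.inc *ᵥ y :=
  fun i => by
    rw [inc_mulVec_apply]
    exact Finset.sum_nonneg fun e _ => by split_ifs; exacts [hy e, le_rfl]

variable {C}

theorem Uniform.sum_inc_mulVec (hC : C.Uniform d) (y : {e // e ∈ C.edges} → ℤ) :
    ∑ i, (C.inc *ᵥ y) i = d * ∑ e, y e := by
  have hones : 1 ᵥ* C.inc = fun _ => (d : ℤ) := by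
    ext e
    simp [vecMul_inc_apply, hC e.1 e.2]
  rw [← one_dotProduct, dotProduct_mulVec, hones, dotProduct, Finset.mul_sum]

theorem HasMFMC.exists_cover_packing (h : C.HasMFMC) {z : Fin n → ℤ} (hz : 0 ≤ z) :
    ∃ (x : Fin n → ℤ) (y : {e // e ∈ C.edges} → ℤ),
      (∀ e, 1 ≤ (x ᵥ* C.inc) e) ∧ C.inc *ᵥ y ≤ z ∧ z ⬝ᵥ x = ∑ e, y e := by
  obtain ⟨x, y, hcover, -, hpack, hdual⟩ := h fun i => (z i).toNat
  have hz' (i : Fin n) : ((z i).toNat : ℤ) = z i := Int.toNat_of_nonneg (hz i)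
  refine ⟨fun i => x i, fun e => y e.1, fun e => ?_, fun i => ?_, ?_⟩
  · rw [vecMul_inc_apply]
    exact_mod_cast hcover e.1 e.2
  · have := hpack i
    rw [Finset.sum_filter, ← Finset.sum_coe_sort C.edges] at this
    rw [inc_mulVec_apply, ← hz' i]
    zify at this
    exact this
  · calc z ⬝ᵥ (fun i => (x i : ℤ)) = ((∑ i, (z i).toNat * x i : ℕ) : ℤ) := by
          simp [dotProduct, hz']
      _ = ∑ e : {e // e ∈ C.edges}, (y e.1 : ℤ) := by
          rw [hdual, Nat.cast_sum, Finset.sum_coe_sort C.edges fun e => (y e : ℤ)]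

theorem exists_inc_mulVec_eq_of_smul_eq_of_nonneg (hC : C.Uniform d) (h : C.HasMFMC)
    {z : Fin n → ℤ} (hz : 0 ≤ z) {m : ℤ} (hm : 0 < m) {c : {e // e ∈ C.edges} → ℤ} (hc : 0 ≤ c)
    (hmz : m • z = C.inc *ᵥ c) : ∃ y, C.inc *ᵥ y = z := by
  obtain ⟨x, y, hcover, hpack, hdual⟩ := h.exists_cover_packing hz
  refine ⟨y, ?_⟩
  have hc_le : ∑ e, c e ≤ m * ∑ e, y e := calc
    ∑ e, c e ≤ (x ᵥ* C.inc) ⬝ᵥ c :=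
      Finset.sum_le_sum fun e _ => le_mul_of_one_le_left (hc e) (hcover e)
    _ = (m • z) ⬝ᵥ x := by rw [hmz, ← dotProduct_mulVec, dotProduct_comm]
    _ = m * ∑ e, y e := by rw [smul_dotProduct, hdual, smul_eq_mul]
  have hsum : m * ∑ i, z i ≤ m * ∑ i, (C.inc *ᵥ y) i := calc
    m * ∑ i, z i = ∑ i, (m • z) i := by simp [Finset.mul_sum]
    _ = d * ∑ e, c e := by rw [hmz, hC.sum_inc_mulVec]
    _ ≤ d * (m * ∑ e, y e) := by gcongr
    _ = m * ∑ i, (C.inc *ᵥ y) i := by rw [hC.sum_inc_mulVec]; ring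
  have heq := (Finset.sum_eq_sum_iff_of_le fun i _ => hpack i).mp
    (le_antisymm (Finset.sum_le_sum fun i _ => hpack i) (le_of_mul_le_mul_left hsum hm))
  exact funext fun i => heq i (Finset.mem_univ i)

theorem exists_inc_mulVec_eq_of_smul_eq (hC : C.Uniform d) (h : C.HasMFMC) {z : Fin n → ℤ}
    {m : ℤ} (hm : 0 < m) {t : {e // e ∈ C.edges} → ℤ} (hmz : m • z = C.inc *ᵥ t) :
    ∃ y, C.inc *ᵥ y = z := by
  set N := ∑ e, |t e|
  set c : {e // e ∈ C.edges} → ℤ := t + (m * N) • 1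
  have hc : 0 ≤ c := fun e => by
    have h1 : |t e| ≤ N := Finset.single_le_sum (fun e _ => abs_nonneg (t e)) (Finset.mem_univ e)
    have h2 : N ≤ m * N := le_mul_of_one_le_left (h1.trans' (abs_nonneg _)) hm
    simp only [c, Pi.zero_apply, Pi.add_apply, Pi.smul_apply, Pi.one_apply, smul_eq_mul, mul_one]
    linarith [neg_abs_le (t e)]
  have hmz' : m • (z + N • C.inc *ᵥ 1) = C.inc *ᵥ c := by
    rw [smul_add, hmz, smul_smul, mulVec_add, mulVec_smul]
  have hz' : 0 ≤ z + N • C.inc *ᵥ 1 := fun i => by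
    have := C.inc_mulVec_nonneg hc i
    rw [← hmz', Pi.smul_apply, smul_eq_mul] at this
    exact (mul_nonneg_iff_of_pos_left hm).mp this
  obtain ⟨y, hy⟩ := exists_inc_mulVec_eq_of_smul_eq_of_nonneg hC h hz' hm hc hmz'
  exact ⟨y - N • 1, by rw [mulVec_sub, mulVec_smul, hy, add_sub_cancel_right]⟩

theorem isTorsionFree_quotient_range_inc (hC : C.Uniform d) (h : C.HasMFMC) :
    Module.IsTorsionFree ℤ ((Fin n → ℤ) ⧸ LinearMap.range C.inc.mulVecLin) := by
  refine .of_smul_eq_zero fun m q hmq => ?_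
  obtain ⟨z, rfl⟩ := Submodule.Quotient.mk_surjective _ q
  rw [← Submodule.Quotient.mk_smul, Submodule.Quotient.mk_eq_zero] at hmq
  obtain ⟨t, ht⟩ := hmq
  rw [Submodule.Quotient.mk_eq_zero]
  rcases lt_trichotomy m 0 with hneg | rfl | hpos
  · exact .inr (exists_inc_mulVec_eq_of_smul_eq hC h (neg_pos.mpr hneg)
      (t := -t) (by rw [neg_smul, mulVec_neg, ← ht]; rfl))
  · exact .inl rfl
  · exact .inr (exists_inc_mulVec_eq_of_smul_eq hC h hpos ht.symm)

end Clutter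

/-- If `C` is a uniform clutter with the max-flow min-cut property and
its incidence matrix `A` has rank `r`, then `Δ_r(A) = 1` (equivalently, `A` diagonalizes
over `ℤ` to an identity matrix). -/
theorem stmt6 {n d : ℕ} (C : Clutter n) (hC : C.Uniform d) (h : C.HasMFMC) :
    DeltaOne C.inc ((C.inc.map (Int.cast : ℤ → ℚ)).rank) := by
  have := C.isTorsionFree_quotient_range_inc hC h
  exact C.inc.deltaOne_of_isTorsionFree
end

section
/- Let C be a uniform clutter satisfying the max-flow min-cut property, with incidence vectors v_1,...,v_q of its edges. Then {v_1,...,v_q} is a Hilbert basis: ℕ{v_1,...,v_q} = ℝ₊{v_1,...,v_q} ∩ ℤ^n, i.e., every integral vector in the cone generated by the v_i is a nonnegative integer combination of the v_i. -/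
open Finset

/-- If `C` is a uniform clutter with the max-flow min-cut property,
then the incidence vectors `v_1, …, v_q` of its edges form a Hilbert basis: every
integral vector in the real cone `ℝ₊{v_1,…,v_q}` is a nonnegative integer combination
of the `v_i`. -/
theorem stmt7 {n d : ℕ} (C : Clutter n) (hC : C.Uniform d) (h : C.HasMFMC)
    (a : Fin n → ℤ)
    (ha : ∃ lam : {e // e ∈ C.edges} → ℝ, (∀ e, 0 ≤ lam e) ∧
      ∀ i, (a i : ℝ) = ∑ e, lam e * (if i ∈ e.1 then 1 else 0)) :
    ∃ c : {e // e ∈ C.edges} → ℕ,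
      ∀ i, a i = ∑ e, (c e : ℤ) * (if i ∈ e.1 then 1 else 0) := by

  classical
  obtain ⟨lam, hlam0, hlam⟩ := ha
  by_cases hE : C.edges.Nonempty
  · obtain ⟨e0, he0⟩ := hE
    have hd : 0 < d := by
      have h1 := Finset.card_pos.mpr (C.nonempty_edges e0 he0)
      rwa [hC e0 he0] at h1
    have hnn : ∀ i, 0 ≤ a i := by
      intro i
      have : (0:ℝ) ≤ (a i : ℝ) := by
        rw [hlam i]
        refine Finset.sum_nonneg fun e _ => ?_
        have := hlam0 e
        positivity
      exact_mod_cast this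
    set α : Fin n → ℕ := fun i => (a i).toNat with hαdef
    have hα : ∀ i, (α i : ℤ) = a i := fun i => Int.toNat_of_nonneg (hnn i)
    have hαR : ∀ i, ((α i : ℕ) : ℝ) = (a i : ℝ) := fun i => by exact_mod_cast hα i
    obtain ⟨x, y, hx, hy0, hyfeas, hobj⟩ := h α
    -- the coordinate sum of each incidence vector is d
    have hcard : ∀ e : {e // e ∈ C.edges},
        ∑ i : Fin n, (if i ∈ e.1 then (1:ℝ) else 0) = (d : ℝ) := by
      intro e
      rw [Finset.sum_ite_mem, Finset.univ_inter, Finset.sum_const, hC e.1 e.2]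
      simp
    -- ∑ a = d * S
    have hA : ∑ i, (a i : ℝ) = ∑ e : {e // e ∈ C.edges}, lam e * (d : ℝ) := by
      calc ∑ i, (a i:ℝ)
          = ∑ i, ∑ e, lam e * (if i ∈ e.1 then (1:ℝ) else 0) :=
            Finset.sum_congr rfl fun i _ => hlam i
        _ = ∑ e, ∑ i, lam e * (if i ∈ (e : {e // e ∈ C.edges}).1 then (1:ℝ) else 0) :=
            Finset.sum_comm
        _ = ∑ e, lam e * (d:ℝ) := by
            refine Finset.sum_congr rfl fun e _ => ?_
            rw [← Finset.mul_sum, hcard e]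
    -- S ≤ N
    have hNge : ∑ e : {e // e ∈ C.edges}, lam e ≤ ((∑ e ∈ C.edges, y e : ℕ) : ℝ) := by
      have h1 : ((∑ e ∈ C.edges, y e : ℕ):ℝ) = ∑ i, (a i : ℝ) * (x i : ℝ) := by
        rw [← hobj]
        push_cast
        exact Finset.sum_congr rfl fun i _ => by rw [hαR]
      have h2 : ∑ i, (a i:ℝ) * (x i : ℝ)
          = ∑ e : {e // e ∈ C.edges}, lam e * ∑ i ∈ e.1, (x i : ℝ) := by
        calc ∑ i, (a i:ℝ) * (x i:ℝ)
            = ∑ i, (∑ e, lam e * (if i ∈ e.1 then (1:ℝ) else 0)) * (x i:ℝ) :=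
              Finset.sum_congr rfl fun i _ => by rw [hlam i]
          _ = ∑ i, ∑ e, lam e * (if i ∈ (e:{e // e ∈ C.edges}).1 then (1:ℝ) else 0) * (x i:ℝ) :=
              Finset.sum_congr rfl fun i _ => Finset.sum_mul _ _ _
          _ = ∑ e, ∑ i, lam e * (if i ∈ (e:{e // e ∈ C.edges}).1 then (1:ℝ) else 0) * (x i:ℝ) :=
              Finset.sum_comm
          _ = ∑ e : {e // e ∈ C.edges}, lam e * ∑ i ∈ e.1, (x i : ℝ) := by
              refine Finset.sum_congr rfl fun e _ => ?_
              simp only [mul_ite, ite_mul, mul_one, mul_zero, zero_mul]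
              rw [Finset.sum_ite_mem, Finset.univ_inter, Finset.mul_sum]
      rw [h1, h2]
      calc ∑ e : {e // e ∈ C.edges}, lam e
          = ∑ e : {e // e ∈ C.edges}, lam e * 1 := by simp
        _ ≤ ∑ e : {e // e ∈ C.edges}, lam e * ∑ i ∈ e.1, (x i : ℝ) := by
            refine Finset.sum_le_sum fun e _ => ?_
            refine mul_le_mul_of_nonneg_left ?_ (hlam0 e)
            exact_mod_cast hx e.1 e.2
    -- total of dual solution
    have hT : ∑ i, ∑ e ∈ C.edges.filter (fun e => i ∈ e), y e
        = d * ∑ e ∈ C.edges, y e := by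
      calc ∑ i, ∑ e ∈ C.edges.filter (fun e => i ∈ e), y e
          = ∑ i, ∑ e ∈ C.edges, if i ∈ e then y e else 0 :=
            Finset.sum_congr rfl fun i _ => Finset.sum_filter _ _
        _ = ∑ e ∈ C.edges, ∑ i : Fin n, if i ∈ e then y e else 0 := Finset.sum_comm
        _ = ∑ e ∈ C.edges, d * y e := by
            refine Finset.sum_congr rfl fun e he => ?_
            rw [Finset.sum_ite_mem, Finset.univ_inter, Finset.sum_const, smul_eq_mul,
              hC e he]
        _ = d * ∑ e ∈ C.edges, y e := by rw [Finset.mul_sum]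
    -- ∑ α ≤ d * N
    have hle1 : ∑ i, α i ≤ d * ∑ e ∈ C.edges, y e := by
      have : ((∑ i, α i : ℕ) : ℝ) ≤ ((d * ∑ e ∈ C.edges, y e : ℕ) : ℝ) := by
        push_cast
        calc ∑ i, ((α i : ℕ):ℝ) = ∑ i, (a i : ℝ) := Finset.sum_congr rfl fun i _ => hαR i
          _ = ∑ e : {e // e ∈ C.edges}, lam e * (d:ℝ) := hA
          _ = (d:ℝ) * ∑ e : {e // e ∈ C.edges}, lam e := by
              rw [← Finset.sum_mul, mul_comm]
          _ ≤ (d:ℝ) * ((∑ e ∈ C.edges, y e : ℕ) : ℝ) := by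
              refine mul_le_mul_of_nonneg_left hNge ?_
              positivity
          _ = (d:ℝ) * ∑ e ∈ C.edges, ((y e : ℕ):ℝ) := by push_cast; ring
      exact_mod_cast this
    have hle2 : ∑ i, ∑ e ∈ C.edges.filter (fun e => i ∈ e), y e ≤ ∑ i, α i :=
      Finset.sum_le_sum fun i _ => hyfeas i
    have hsum_eq : ∑ i, ∑ e ∈ C.edges.filter (fun e => i ∈ e), y e = ∑ i, α i := by
      exact le_antisymm hle2 (le_trans hle1 hT.ge)
    have key : ∀ i, ∑ e ∈ C.edges.filter (fun e => i ∈ e), y e = α i := by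
      intro i
      exact (Finset.sum_eq_sum_iff_of_le (fun i _ => hyfeas i)).mp hsum_eq i (Finset.mem_univ i)
    refine ⟨fun e => y e.1, fun i => ?_⟩
    have hcast : ∑ e : {e // e ∈ C.edges}, ((y e.1 : ℤ)) * (if i ∈ e.1 then 1 else 0)
        = ((∑ e ∈ C.edges.filter (fun e => i ∈ e), y e : ℕ) : ℤ) := by
      push_cast
      rw [Finset.sum_filter]
      rw [← Finset.sum_coe_sort C.edges (fun e => if i ∈ e then (y e : ℤ) else 0)]
      exact Finset.sum_congr rfl fun e _ => by rw [mul_ite, mul_one, mul_zero]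
    rw [hcast, key i, hα i]
  · refine ⟨0, fun i => ?_⟩
    have hIE : IsEmpty {e // e ∈ C.edges} := ⟨fun e => hE ⟨e.1, e.2⟩⟩
    have h0 : (a i : ℝ) = 0 := by rw [hlam i]; rw [Finset.univ_eq_empty, Finset.sum_empty]
    have : a i = 0 := by exact_mod_cast h0
    rw [this, Finset.univ_eq_empty, Finset.sum_empty]
end

section
/- Let C be a d-uniform clutter on n vertices satisfying the max-flow min-cut property. Then C has a perfect matching if and only if n = d·α₀(C). -/
open Finset

namespace Clutter

variable {n : ℕ}

lemma matching_le_cover (C : Clutter n) {M : Finset (Finset (Fin n))}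
    (hM : M ⊆ C.edges) (hd : ∀ e ∈ M, ∀ f ∈ M, e ≠ f → Disjoint e f)
    {S : Finset (Fin n)} (hS : C.IsCover S) : M.card ≤ S.card := by
  have h1 : M.card ≤ ∑ e ∈ M, (e ∩ S).card := by
    calc M.card = ∑ _e ∈ M, 1 := by simp
    _ ≤ _ := Finset.sum_le_sum fun e he => Finset.card_pos.mpr (hS e (hM he))
  have h2 : ∑ e ∈ M, (e ∩ S).card = (M.biUnion (fun e => e ∩ S)).card := by
    rw [Finset.card_biUnion]
    intro e he f hf hef
    exact Finset.disjoint_of_subset_left Finset.inter_subset_left <|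
      Finset.disjoint_of_subset_right Finset.inter_subset_left (hd e he f hf hef)
  have h3 : M.biUnion (fun e => e ∩ S) ⊆ S := by
    intro i hi
    rcases Finset.mem_biUnion.mp hi with ⟨e, _, hie⟩
    exact (Finset.mem_inter.mp hie).2
  calc M.card ≤ _ := h1
    _ = _ := h2
    _ ≤ S.card := Finset.card_le_card h3

lemma exists_min_cover (C : Clutter n) :
    ∃ S, C.IsCover S ∧ S.card = C.coverNumber := by
  have hne : {k | ∃ S : Finset (Fin n), C.IsCover S ∧ S.card = k}.Nonempty :=
    ⟨(univ : Finset (Fin n)).card, univ, fun e he => by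
      simpa using C.nonempty_edges e he, rfl⟩
  exact Nat.sInf_mem hne

lemma coverNumber_le (C : Clutter n) {S : Finset (Fin n)} (hS : C.IsCover S) :
    C.coverNumber ≤ S.card :=
  Nat.sInf_le ⟨S, hS, rfl⟩

lemma exists_max_matching (C : Clutter n) (h : C.HasMFMC) :
    ∃ M, M ⊆ C.edges ∧ (∀ e ∈ M, ∀ f ∈ M, e ≠ f → Disjoint e f) ∧
      M.card = C.coverNumber := by
  obtain ⟨x, y, hx, hy0, hyα, heq⟩ := h 1
  have hy1 : ∀ e ∈ C.edges, y e ≤ 1 := by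
    intro e he
    obtain ⟨i, hi⟩ := C.nonempty_edges e he
    calc y e ≤ ∑ f ∈ C.edges.filter (fun f => i ∈ f), y f :=
        Finset.single_le_sum (fun _ _ => Nat.zero_le _)
          (Finset.mem_filter.mpr ⟨he, hi⟩)
      _ ≤ 1 := hyα i
  set M := C.edges.filter (fun e => y e ≠ 0) with hMdef
  have hMsub : M ⊆ C.edges := Finset.filter_subset _ _
  have hyM : ∀ e ∈ M, y e = 1 := by
    intro e he
    have h1 := hy1 e (hMsub he)
    have h2 := (Finset.mem_filter.mp he).2
    omega
  have hdisj : ∀ e ∈ M, ∀ f ∈ M, e ≠ f → Disjoint e f := by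
    intro e he f hf hef
    rw [Finset.disjoint_left]
    intro i hie hif
    have hpair : ({e, f} : Finset (Finset (Fin n))) ⊆
        C.edges.filter (fun g => i ∈ g) := by
      intro g hg
      rcases Finset.mem_insert.mp hg with rfl | hg
      · exact Finset.mem_filter.mpr ⟨hMsub he, hie⟩
      · rw [Finset.mem_singleton.mp hg]
        exact Finset.mem_filter.mpr ⟨hMsub hf, hif⟩
    have hle : y e + y f ≤ 1 := by
      calc y e + y f = ∑ g ∈ ({e, f} : Finset (Finset (Fin n))), y g := by
            rw [Finset.sum_pair hef]
        _ ≤ ∑ g ∈ C.edges.filter (fun g => i ∈ g), y g :=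
            Finset.sum_le_sum_of_subset hpair
        _ ≤ 1 := hyα i
    have := hyM e he
    have := hyM f hf
    omega
  have hsum : ∑ e ∈ C.edges, y e = M.card := by
    rw [← Finset.sum_filter_ne_zero C.edges (f := y), ← hMdef]
    rw [Finset.sum_congr rfl hyM]
    simp
  have hxsum : ∑ i, x i = M.card := by
    have : ∑ i, (1 : Fin n → ℕ) i * x i = ∑ i, x i := by simp
    rw [← this, heq, hsum]
  -- the support of x is a cover
  have hcov : C.IsCover (univ.filter (fun i => x i ≠ 0)) := by
    intro e he
    by_contra hcon
    have hzero : ∀ i ∈ e, x i = 0 := by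
      intro i hi
      by_contra hxi
      exact hcon ⟨i, Finset.mem_inter.mpr ⟨hi,
        Finset.mem_filter.mpr ⟨Finset.mem_univ i, hxi⟩⟩⟩
    have := hx e he
    rw [Finset.sum_congr rfl hzero] at this
    simp at this
  have hcard1 : C.coverNumber ≤ M.card := by
    calc C.coverNumber ≤ (univ.filter (fun i => x i ≠ 0)).card :=
          C.coverNumber_le hcov
      _ = ∑ i ∈ univ.filter (fun i => x i ≠ 0), 1 := by simp
      _ ≤ ∑ i ∈ univ.filter (fun i => x i ≠ 0), x i :=
          Finset.sum_le_sum fun i hi =>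
            Nat.one_le_iff_ne_zero.mpr (Finset.mem_filter.mp hi).2
      _ ≤ ∑ i, x i := Finset.sum_le_sum_of_subset (Finset.filter_subset _ _)
      _ = M.card := hxsum
  obtain ⟨S₀, hS₀, hS₀card⟩ := C.exists_min_cover
  have hcard2 : M.card ≤ C.coverNumber := by
    rw [← hS₀card]
    exact C.matching_le_cover hMsub hdisj hS₀
  exact ⟨M, hMsub, hdisj, le_antisymm hcard2 hcard1⟩

lemma card_biUnion_matching {d : ℕ} (C : Clutter n) (hC : C.Uniform d)
    {M : Finset (Finset (Fin n))} (hM : M ⊆ C.edges)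
    (hd : ∀ e ∈ M, ∀ f ∈ M, e ≠ f → Disjoint e f) :
    (M.biUnion id).card = d * M.card := by
  rw [show M.biUnion id = M.biUnion (fun e => e) from rfl, Finset.card_biUnion hd]
  rw [Finset.sum_congr rfl (fun e he => hC e (hM he))]
  simp [mul_comm]

end Clutter

/-- Let `C` be a `d`-uniform clutter on `n` vertices with the max-flow
min-cut property. Then `C` has a perfect matching if and only if `n = d · α₀(C)`. -/
theorem stmt9 {n d : ℕ} (C : Clutter n) (hC : C.Uniform d) (h : C.HasMFMC) :
    C.HasPerfectMatching ↔ n = d * C.coverNumber := by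
  obtain ⟨M', hM'sub, hM'disj, hM'card⟩ := C.exists_max_matching h
  have hM'bi : (M'.biUnion id).card = d * C.coverNumber := by
    rw [C.card_biUnion_matching hC hM'sub hM'disj, hM'card]
  constructor
  · rintro ⟨M, hMsub, hMdisj, hMcov⟩
    have hbiuniv : M.biUnion id = univ := by
      apply Finset.eq_univ_of_forall
      intro i
      obtain ⟨e, he, hie⟩ := hMcov i
      exact Finset.mem_biUnion.mpr ⟨e, he, hie⟩
    have hn : n = d * M.card := by
      have := C.card_biUnion_matching hC hMsub hMdisj
      rw [hbiuniv] at this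
      simpa using this
    rcases Nat.eq_zero_or_pos d with rfl | hdpos
    · simpa using hn
    · -- M.card ≤ coverNumber
      obtain ⟨S₀, hS₀, hS₀card⟩ := C.exists_min_cover
      have h1 : M.card ≤ C.coverNumber := hS₀card ▸ C.matching_le_cover hMsub hMdisj hS₀
      -- coverNumber ≤ M.card since d * coverNumber = |biUnion M'| ≤ n = d * |M|
      have h2 : d * C.coverNumber ≤ n := by
        rw [← hM'bi]
        exact (Finset.card_le_card (Finset.subset_univ _)).trans_eq (by simp)
      have : d * C.coverNumber ≤ d * M.card := hn ▸ h2
      have h3 : C.coverNumber ≤ M.card := Nat.le_of_mul_le_mul_left this hdpos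
      exact hn.trans (by rw [Nat.le_antisymm h1 h3])
  · intro hn
    have hcard : (M'.biUnion id).card = (univ : Finset (Fin n)).card := by
      rw [hM'bi, Finset.card_univ, Fintype.card_fin]
      exact hn.symm
    have hbiuniv : M'.biUnion id = univ :=
      Finset.eq_of_subset_of_card_le (Finset.subset_univ _) (le_of_eq hcard.symm)
    refine ⟨M', hM'sub, hM'disj, fun i => ?_⟩
    have : i ∈ M'.biUnion id := hbiuniv ▸ Finset.mem_univ i
    obtain ⟨e, he, hie⟩ := Finset.mem_biUnion.mp this
    exact ⟨e, he, hie⟩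
end

section
/- If a clutter C has the max-flow min-cut property, then C has the packing property; in particular C satisfies the König property α₀(C) = β₁(C). -/
open Finset

section Aux

variable {n : ℕ}

/-- Weak duality: any matching is at most as large as any cover. -/
lemma aux_card_matching_le_card_cover (C : Clutter n) {S : Finset (Fin n)}
    {M : Finset (Finset (Fin n))} (hS : C.IsCover S) (hM : M ⊆ C.edges)
    (hd : ∀ e ∈ M, ∀ f ∈ M, e ≠ f → Disjoint e f) : M.card ≤ S.card := by
  have hpick : ∀ e : {e // e ∈ M}, ∃ i, i ∈ (e : Finset (Fin n)) ∩ S :=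
    fun e => hS e (hM e.2)
  choose pick hpick using hpick
  have h := Finset.card_le_card_of_injOn (s := M.attach) (t := S) pick
    (fun e _ => (Finset.mem_inter.mp (hpick e)).2) ?_
  · simpa using h
  · intro a _ b _ hab
    by_contra hne
    have hne' : (a : Finset (Fin n)) ≠ (b : Finset (Fin n)) :=
      fun hc => hne (Subtype.ext hc)
    have hd' := hd _ a.2 _ b.2 hne'
    exact (Finset.disjoint_left.mp hd' (Finset.mem_inter.mp (hpick a)).1)
      (hab ▸ (Finset.mem_inter.mp (hpick b)).1)

/-- If there is a cover no larger than some matching, König holds. -/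
lemma aux_konig_of (C : Clutter n) {S : Finset (Fin n)} {M : Finset (Finset (Fin n))}
    (hS : C.IsCover S) (hM : M ⊆ C.edges)
    (hd : ∀ e ∈ M, ∀ f ∈ M, e ≠ f → Disjoint e f) (hcard : S.card ≤ M.card) :
    C.HasKonig := by
  have hcov_le : C.coverNumber ≤ S.card := Nat.sInf_le ⟨S, hS, rfl⟩
  have hbdd : BddAbove {k | ∃ M : Finset (Finset (Fin n)), M ⊆ C.edges ∧
      (∀ e ∈ M, ∀ f ∈ M, e ≠ f → Disjoint e f) ∧ M.card = k} := by
    refine ⟨C.edges.card, ?_⟩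
    rintro k ⟨M', hM', -, rfl⟩
    exact Finset.card_le_card hM'
  have hmatch_ge : M.card ≤ C.matchNumber := le_csSup hbdd ⟨M, hM, hd, rfl⟩
  have hms : C.matchNumber ≤ C.coverNumber := by
    have hcovne : {k | ∃ S : Finset (Fin n), C.IsCover S ∧ S.card = k}.Nonempty :=
      ⟨Finset.univ.card, Finset.univ,
        fun e he => by simpa using C.nonempty_edges e he, rfl⟩
    have hmne : {k | ∃ M : Finset (Finset (Fin n)), M ⊆ C.edges ∧
        (∀ e ∈ M, ∀ f ∈ M, e ≠ f → Disjoint e f) ∧ M.card = k}.Nonempty :=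
      ⟨0, ∅, Finset.empty_subset _, by simp, rfl⟩
    unfold Clutter.matchNumber Clutter.coverNumber
    apply csSup_le hmne
    rintro k ⟨M', hM', hd', rfl⟩
    refine le_csInf hcovne ?_
    rintro m ⟨S', hS', rfl⟩
    exact aux_card_matching_le_card_cover C hS' hM' hd'
  exact le_antisymm (hcov_le.trans (hcard.trans hmatch_ge)) hms

/-- The key lemma: MFMC implies every minor has the König property. -/
lemma aux_minor_konig (C : Clutter n) (h : C.HasMFMC) (D U : Finset (Fin n))
    (hDU : Disjoint D U) (hne : ∀ e ∈ C.edges, Disjoint e D → ¬ e ⊆ U) :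
    (C.minor D U).HasKonig := by
  classical
  set α : Fin n → ℕ := fun i => if i ∈ D then 0 else if i ∈ U then n + 1 else 1 with hα
  obtain ⟨x, y, hx, hy0, hyc, heq⟩ := h α
  -- edges meeting D carry no dual weight
  have hyD : ∀ e ∈ C.edges, ¬ Disjoint e D → y e = 0 := by
    intro e he hed
    obtain ⟨i, hie, hiD⟩ := Finset.not_disjoint_iff.mp hed
    have h1 : y e ≤ ∑ f ∈ C.edges.filter (fun f => i ∈ f), y f :=
      Finset.single_le_sum (fun _ _ => Nat.zero_le _) (Finset.mem_filter.mpr ⟨he, hie⟩)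
    have h2 := hyc i
    simp only [hα, if_pos hiD] at h2
    omega
  -- every edge disjoint from D has a vertex outside D ∪ U
  have hwit : ∀ e ∈ C.edges, Disjoint e D → ∃ i ∈ e, i ∉ D ∧ i ∉ U := by
    intro e he hed
    obtain ⟨i, hie, hiU⟩ := Finset.not_subset.mp (hne e he hed)
    exact ⟨i, hie, Finset.disjoint_left.mp hed hie, hiU⟩
  have hy1 : ∀ e ∈ C.edges, y e ≤ 1 := by
    intro e he
    by_cases hed : Disjoint e D
    · obtain ⟨i, hie, hiD, hiU⟩ := hwit e he hed
      have h1 : y e ≤ ∑ f ∈ C.edges.filter (fun f => i ∈ f), y f :=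
        Finset.single_le_sum (fun _ _ => Nat.zero_le _) (Finset.mem_filter.mpr ⟨he, hie⟩)
      have h2 := hyc i
      simp only [hα, if_neg hiD, if_neg hiU] at h2
      omega
    · simp [hyD e he hed]
  -- the total dual weight is at most n
  set R : Finset (Fin n) := Finset.univ.filter (fun i => i ∉ D ∧ i ∉ U) with hR
  have hαR : ∀ i ∈ R, α i = 1 := by
    intro i hi
    rw [hR, Finset.mem_filter] at hi
    simp only [hα, if_neg hi.2.1, if_neg hi.2.2]
  have hRsum : ∑ e ∈ C.edges, y e ≤ n := by
    have step1 : ∑ e ∈ C.edges, y e ≤ ∑ e ∈ C.edges, (e ∩ R).card * y e := by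
      apply Finset.sum_le_sum
      intro e he
      by_cases hed : Disjoint e D
      · obtain ⟨i, hie, hiD, hiU⟩ := hwit e he hed
        have hne' : (e ∩ R).Nonempty :=
          ⟨i, Finset.mem_inter.mpr ⟨hie, by simp [hR, hiD, hiU]⟩⟩
        have h1 : 1 ≤ (e ∩ R).card := Finset.card_pos.mpr hne'
        calc y e = 1 * y e := (one_mul _).symm
          _ ≤ (e ∩ R).card * y e := Nat.mul_le_mul_right _ h1
      · simp [hyD e he hed]
    have step2 : ∀ e : Finset (Fin n),
        (e ∩ R).card * y e = ∑ i ∈ R, (if i ∈ e then y e else 0) := by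
      intro e
      have hfe : R.filter (fun i => i ∈ e) = e ∩ R := by
        ext i; simp [Finset.mem_inter, Finset.mem_filter, and_comm]
      rw [← Finset.sum_filter, hfe, Finset.sum_const, smul_eq_mul]
    have step3 : ∑ e ∈ C.edges, ∑ i ∈ R, (if i ∈ e then y e else 0)
        = ∑ i ∈ R, ∑ e ∈ C.edges, (if i ∈ e then y e else 0) := Finset.sum_comm
    have step4 : ∀ i ∈ R, ∑ e ∈ C.edges, (if i ∈ e then y e else 0) ≤ 1 := by
      intro i hi
      have h1 : ∑ e ∈ C.edges, (if i ∈ e then y e else 0)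
          = ∑ e ∈ C.edges.filter (fun e => i ∈ e), y e := (Finset.sum_filter _ _).symm
      rw [h1]
      exact (hyc i).trans_eq (hαR i hi)
    calc ∑ e ∈ C.edges, y e ≤ ∑ e ∈ C.edges, (e ∩ R).card * y e := step1
      _ = ∑ e ∈ C.edges, ∑ i ∈ R, (if i ∈ e then y e else 0) := by
          exact Finset.sum_congr rfl fun e _ => step2 e
      _ = ∑ i ∈ R, ∑ e ∈ C.edges, (if i ∈ e then y e else 0) := step3
      _ ≤ ∑ i ∈ R, 1 := Finset.sum_le_sum step4
      _ = R.card := by simp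
      _ ≤ n := by simpa using Finset.card_le_univ R
  -- x vanishes on U
  have hxU : ∀ i ∈ U, x i = 0 := by
    intro i hiU
    by_contra hxi
    have hiD : i ∉ D := Finset.disjoint_right.mp hDU hiU
    have hαi : α i = n + 1 := by simp only [hα, if_neg hiD, if_pos hiU]
    have h1 : α i * x i ≤ ∑ j, α j * x j :=
      Finset.single_le_sum (f := fun j => α j * x j)
        (fun _ _ => Nat.zero_le _) (Finset.mem_univ i)
    rw [heq] at h1
    have h2 : 1 ≤ x i := Nat.one_le_iff_ne_zero.mpr hxi
    have h3 : n + 1 ≤ α i * x i := by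
      rw [hαi]
      calc n + 1 = (n + 1) * 1 := (mul_one _).symm
        _ ≤ (n + 1) * x i := Nat.mul_le_mul_left _ h2
    omega
  -- the cover of the minor
  set S : Finset (Fin n) := R.filter (fun i => x i ≠ 0) with hS
  have hScov : (C.minor D U).IsCover S := by
    intro g hg
    have hg' : g ∈ C.minorEdges D U := hg
    rw [Clutter.minorEdges, Finset.mem_filter] at hg'
    obtain ⟨hgI, hgne, -⟩ := hg'
    rw [Finset.mem_image] at hgI
    obtain ⟨e, he', rfl⟩ := hgI
    rw [Finset.mem_filter] at he'
    obtain ⟨he, hed⟩ := he'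
    have h1 : 1 ≤ ∑ i ∈ e, x i := hx e he
    have h2 : ∑ i ∈ e \ U, x i = ∑ i ∈ e, x i := by
      apply Finset.sum_subset (Finset.sdiff_subset)
      intro i hie hni
      exact hxU i (by simp only [Finset.mem_sdiff, not_and, not_not] at hni; exact hni hie)
    obtain ⟨i, hi, hxi⟩ : ∃ i ∈ e \ U, x i ≠ 0 := by
      by_contra hcon
      push_neg at hcon
      rw [← h2, Finset.sum_eq_zero hcon] at h1
      omega
    have hie := Finset.mem_sdiff.mp hi
    refine ⟨i, Finset.mem_inter.mpr ⟨hi, ?_⟩⟩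
    rw [hS, Finset.mem_filter, hR, Finset.mem_filter]
    exact ⟨⟨Finset.mem_univ i, Finset.disjoint_left.mp hed hie.1, hie.2⟩, hxi⟩
  have hScard : S.card ≤ ∑ e ∈ C.edges, y e := by
    rw [← heq]
    calc S.card = ∑ i ∈ S, 1 := by simp
      _ ≤ ∑ i ∈ S, α i * x i := by
          apply Finset.sum_le_sum
          intro i hi
          rw [hS, Finset.mem_filter] at hi
          rw [hαR i hi.1, one_mul]
          exact Nat.one_le_iff_ne_zero.mpr hi.2
      _ ≤ ∑ i ∈ Finset.univ, α i * x i :=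
          Finset.sum_le_sum_of_subset (Finset.subset_univ S)
  -- the matching of the minor
  set T := C.edges.filter (fun e => y e ≠ 0) with hT
  have hTedges : ∀ e ∈ T, e ∈ C.edges := fun e he => (Finset.mem_filter.mp he).1
  have hTy : ∀ e ∈ T, y e = 1 := by
    intro e he
    have := hy1 e (hTedges e he)
    have := (Finset.mem_filter.mp he).2
    omega
  have hTdisjD : ∀ e ∈ T, Disjoint e D := by
    intro e he
    by_contra hcon
    exact (Finset.mem_filter.mp he).2 (hyD e (hTedges e he) hcon)
  have hTsum : ∑ e ∈ C.edges, y e = T.card := by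
    rw [hT, ← Finset.sum_filter_ne_zero C.edges (f := y)]
    rw [Finset.sum_congr rfl (fun e he => hTy e he), Finset.sum_const, smul_eq_mul, mul_one]
  have hTdisj2 : ∀ e ∈ T, ∀ f ∈ T, e ≠ f → Disjoint (e \ U) (f \ U) := by
    intro e he f hf hef
    rw [Finset.disjoint_left]
    intro i hie hif
    obtain ⟨hie', hiU⟩ := Finset.mem_sdiff.mp hie
    obtain ⟨hif', -⟩ := Finset.mem_sdiff.mp hif
    have hiD : i ∉ D := Finset.disjoint_left.mp (hTdisjD e he) hie'
    have hsub : ({e, f} : Finset (Finset (Fin n))) ⊆ C.edges.filter (fun g => i ∈ g) := by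
      intro g hg
      rw [Finset.mem_insert, Finset.mem_singleton] at hg
      rcases hg with hg | hg
      · rw [hg]; exact Finset.mem_filter.mpr ⟨hTedges e he, hie'⟩
      · rw [hg]; exact Finset.mem_filter.mpr ⟨hTedges f hf, hif'⟩
    have h1 : ∑ g ∈ ({e, f} : Finset (Finset (Fin n))), y g
        ≤ ∑ g ∈ C.edges.filter (fun g => i ∈ g), y g :=
      Finset.sum_le_sum_of_subset hsub
    rw [Finset.sum_pair hef] at h1
    have h2 := hyc i
    simp only [hα, if_neg hiD, if_neg hiU] at h2
    have h3 := hTy e he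
    have h4 := hTy f hf
    omega
  have hTne : ∀ e ∈ T, (e \ U).Nonempty := by
    intro e he
    obtain ⟨i, hie, hiD, hiU⟩ := hwit e (hTedges e he) (hTdisjD e he)
    exact ⟨i, Finset.mem_sdiff.mpr ⟨hie, hiU⟩⟩
  -- choose a minimal minor edge inside each e \ U
  have hmin : ∀ e : Finset (Fin n), ∃ g, e ∈ T →
      g ∈ (C.minor D U).edges ∧ g ⊆ e \ U := by
    intro e
    by_cases he : e ∈ T
    · set I := (C.edges.filter (fun e => Disjoint e D)).image (fun e => e \ U) with hI
      set P := I.filter (fun g => g.Nonempty ∧ g ⊆ e \ U) with hP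
      have hPne : P.Nonempty := by
        refine ⟨e \ U, Finset.mem_filter.mpr ⟨?_, hTne e he, subset_rfl⟩⟩
        exact Finset.mem_image.mpr ⟨e, Finset.mem_filter.mpr
          ⟨hTedges e he, hTdisjD e he⟩, rfl⟩
      obtain ⟨g, hgP, hgmin⟩ := Finset.exists_min_image P Finset.card hPne
      obtain ⟨hgI, hgne, hgsub⟩ := Finset.mem_filter.mp hgP
      refine ⟨g, fun _ => ⟨?_, hgsub⟩⟩
      show g ∈ C.minorEdges D U
      rw [Clutter.minorEdges, Finset.mem_filter]
      refine ⟨hgI, hgne, ?_⟩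
      intro f hfI hfne hfsub
      have hfP : f ∈ P := Finset.mem_filter.mpr ⟨hfI, hfne, hfsub.trans hgsub⟩
      exact Finset.eq_of_subset_of_card_le hfsub (hgmin f hfP)
    · exact ⟨∅, fun hc => absurd hc he⟩
  choose gf hgf using hmin
  set M := T.image gf with hM
  have hMinj : Set.InjOn gf ↑T := by
    intro e he f hf hgef
    by_contra hef
    rw [Finset.mem_coe] at he hf
    have h1 := hgf e he
    have h2 := hgf f hf
    have hd := hTdisj2 e he f hf hef
    obtain ⟨i, hi⟩ := (C.minor D U).nonempty_edges _ h1.1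
    exact Finset.disjoint_left.mp hd (h1.2 hi) (h2.2 (hgef ▸ hi))
  have hMcard : M.card = T.card := Finset.card_image_of_injOn hMinj
  have hMsub : M ⊆ (C.minor D U).edges := by
    intro g hg
    obtain ⟨e, he, rfl⟩ := Finset.mem_image.mp hg
    exact (hgf e he).1
  have hMdisj : ∀ g₁ ∈ M, ∀ g₂ ∈ M, g₁ ≠ g₂ → Disjoint g₁ g₂ := by
    intro g₁ hg₁ g₂ hg₂ hne'
    obtain ⟨e, he, rfl⟩ := Finset.mem_image.mp hg₁
    obtain ⟨f, hf, rfl⟩ := Finset.mem_image.mp hg₂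
    have hef : e ≠ f := fun hc => hne' (hc ▸ rfl)
    exact (hTdisj2 e he f hf hef).mono (hgf e he).2 (hgf f hf).2
  exact aux_konig_of (C.minor D U) hScov hMsub hMdisj
    (by rw [hMcard]; omega)

end Aux

/-- If a clutter `C` has the max-flow min-cut property, then `C` has
the packing property; in particular `C` satisfies the König property `α₀(C) = β₁(C)`. -/
theorem stmt10 {n : ℕ} (C : Clutter n) (h : C.HasMFMC) :
    C.PackingProperty ∧ C.HasKonig := by
  constructor
  · intro D U hDU hne
    exact aux_minor_konig C h D U hDU hne
  · have hne : ∀ e ∈ C.edges, Disjoint e (∅ : Finset (Fin n)) →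
        ¬ e ⊆ (∅ : Finset (Fin n)) := by
      intro e he _ hsub
      have hone := C.nonempty_edges e he
      rw [Finset.subset_empty] at hsub
      subst hsub
      exact Finset.not_nonempty_empty hone
    have hk := aux_minor_konig C h ∅ ∅ (Finset.disjoint_empty_right _) hne
    have hedges : (C.minor ∅ ∅).edges = C.edges := by
      show C.minorEdges ∅ ∅ = C.edges
      rw [Clutter.minorEdges]
      have h1 : C.edges.filter (fun e => Disjoint e (∅ : Finset (Fin n))) = C.edges := by
        apply Finset.filter_true_of_mem
        intro e _
        exact Finset.disjoint_empty_right _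
      have h2 : C.edges.image (fun e => e \ (∅ : Finset (Fin n))) = C.edges := by
        rw [show (fun e : Finset (Fin n) => e \ (∅ : Finset (Fin n))) = id by
          funext e; simp, Finset.image_id]
      rw [h1, h2]
      apply Finset.filter_true_of_mem
      intro e he
      exact ⟨C.nonempty_edges e he, fun f hf hfne hsub => C.antichain f hf e he hsub⟩
    unfold Clutter.HasKonig Clutter.coverNumber Clutter.matchNumber Clutter.IsCover at hk ⊢
    rw [hedges] at hk
    exact hk
end
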